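/- Let I be an ideal on ℕ with the Baire property. A Banach space X contains no isomorphic copy of c₀ if and only if for every series ∑ x_n in X which is not unconditionally convergent, the set A(I) = {t ∈ {0,1}^ℕ : (∑_{i=1}^n t(i) x_i)_n is I-bounded} is meager in the Cantor space {0,1}^ℕ. -/

import Mathlib

open Filter

/-- An ideal `I` on `ℕ` has the Baire property if the corresponding set of
characteristic functions is Baire measurable in the Cantor space `ℕ → Bool`. -/
def IdealHasBaireProperty (I : Set (Set ℕ)) : Prop :=
  BaireMeasurableSet {t : ℕ → Bool | {n : ℕ | t n = true} ∈ I}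

/-- A Banach space contains an isomorphic copy of `c₀` if there is a continuous
linear map from `c₀ = C₀(ℕ, ℝ)` into it which is bounded below. -/
def ContainsCopyOfC0 (X : Type*) [NormedAddCommGroup X] [NormedSpace ℝ X] : Prop :=
  ∃ T : ZeroAtInftyContinuousMap ℕ ℝ →L[ℝ] X, ∃ c > (0 : ℝ),
    ∀ v : ZeroAtInftyContinuousMap ℕ ℝ, c * ‖v‖ ≤ ‖T v‖

/-- A series `∑ x n` is unconditionally convergent if every rearrangement converges. -/
def UnconditionallyConvergent {X : Type*} [NormedAddCommGroup X] (x : ℕ → X) : Prop :=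
  ∀ p : Equiv.Perm ℕ, ∃ L : X,
    Tendsto (fun n => ∑ i ∈ Finset.range n, x (p i)) atTop (nhds L)

/-!
If `X` contains `c₀`, the images of the unit vectors form a series that is not unconditionally
convergent although its partial sums along every pattern `t` are uniformly bounded, so `A(I)` is
the whole Cantor space.

Conversely, a Baire measurable ideal is invariant under finite modifications, hence meagre by the
topological 0-1 law, and a meagre ideal contains only finitely many intervals of some partition of
`ℕ` into finite intervals (Talagrand, Jalali-Naini). If `A(I)` is not meagre, then by Baire
category the partial sums return to a fixed ball on all late intervals for every pattern in some
cylinder, which bounds all finite sums of the tail of the series. A series that is not Cauchy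
then has disjoint blocks, of norm bounded below, all of whose finite sums are bounded. Such a
sequence is weakly null, so it has an almost biorthogonal subsequence, and that subsequence spans
a copy of `c₀` (Bessaga–Pełczyński).
-/

open Set Topology PiNat Metric

def xorHomeomorph (g : ℕ → Bool) : (ℕ → Bool) ≃ₜ (ℕ → Bool) where
  toFun t n := xor (g n) (t n)
  invFun t n := xor (g n) (t n)
  left_inv t := by simp
  right_inv t := by simp
  continuous_toFun := continuous_pi fun n =>
    (continuous_of_discreteTopology (f := xor (g n))).comp (continuous_apply n)
  continuous_invFun := continuous_pi fun n =>
    (continuous_of_discreteTopology (f := xor (g n))).comp (continuous_apply n)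

@[simp]
lemma xorHomeomorph_apply (g t : ℕ → Bool) (n : ℕ) : xorHomeomorph g t n = xor (g n) (t n) := rfl

@[simp]
lemma xorHomeomorph_xorHomeomorph (g t : ℕ → Bool) : xorHomeomorph g (xorHomeomorph g t) = t :=
  (xorHomeomorph g).symm_apply_apply t

lemma exists_cylinder_subset {U : Set (ℕ → Bool)} (hU : IsOpen U) {t : ℕ → Bool} (ht : t ∈ U) :
    ∃ m, cylinder t m ⊆ U := by
  obtain ⟨_, ⟨x, m, rfl⟩, htx, hxU⟩ :=
    (isTopologicalBasis_cylinders fun _ => Bool).exists_subset_of_mem_open ht hU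
  exact ⟨m, by rwa [mem_cylinder_iff_eq.1 htx]⟩

lemma exists_xorHomeomorph_mem_cylinder (t t₀ : ℕ → Bool) (m : ℕ) :
    ∃ s ∈ (Finset.range m).powerset, xorHomeomorph (· ∈ s) t ∈ cylinder t₀ m ∧
      ∀ i, m ≤ i → xorHomeomorph (· ∈ s) t i = t i := by
  refine ⟨(Finset.range m).filter (fun i => t i ≠ t₀ i),
    Finset.mem_powerset.2 (Finset.filter_subset _ _), fun i hi => ?_, fun i hi => ?_⟩
  · cases h : t i <;> cases h' : t₀ i <;> simp [h, h', hi]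
  · simp [show ¬ i < m by omega]

lemma isMeagre_diff_of_eventuallyEq {X : Type*} [TopologicalSpace X] {s t : Set X}
    (h : s =ᶠ[residual X] t) : IsMeagre (s \ t) := by
  filter_upwards [Filter.eventuallyEq_set.1 h] with x hx
  simp [hx]

lemma isMeagre_compl_of_forall_xorHomeomorph_preimage_eq {S : Set (ℕ → Bool)}
    (hS : BaireMeasurableSet S) (hinv : ∀ s : Finset ℕ, xorHomeomorph (· ∈ s) ⁻¹' S = S)
    (hnm : ¬ IsMeagre S) : IsMeagre Sᶜ := by
  obtain ⟨U, hU, hSU⟩ := hS.residualEq_isOpen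
  obtain ⟨t₀, ht₀⟩ : U.Nonempty := by
    by_contra! hU₀
    exact hnm (by simpa [hU₀] using isMeagre_diff_of_eventuallyEq hSU)
  obtain ⟨m, hm⟩ := exists_cylinder_subset hU ht₀
  have hcyl : IsMeagre (cylinder t₀ m \ S) :=
    (isMeagre_diff_of_eventuallyEq hSU.symm).mono (sdiff_subset_sdiff_left hm)
  refine (isMeagre_biUnion (Finset.countable_toSet (Finset.range m).powerset) fun s _ =>
    hcyl.preimage_of_isOpenMap (xorHomeomorph (· ∈ s)).continuous
      (xorHomeomorph (· ∈ s)).isOpenMap).mono fun t ht => ?_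
  obtain ⟨s, hs, hts, -⟩ := exists_xorHomeomorph_mem_cylinder t t₀ m
  refine mem_biUnion (x := s) hs ⟨hts, fun h => ht ?_⟩
  rwa [← hinv s]

def codeSet (I : Set (Set ℕ)) : Set (ℕ → Bool) := {t | {n | t n = true} ∈ I}

section Ideal

variable {I : Set (Set ℕ)}

lemma xorHomeomorph_preimage_codeSet (hUnion : ∀ A B : Set ℕ, A ∈ I → B ∈ I → A ∪ B ∈ I)
    (hSub : ∀ A B : Set ℕ, A ⊆ B → B ∈ I → A ∈ I) (hFin : ∀ A : Set ℕ, A.Finite → A ∈ I)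
    (s : Finset ℕ) : xorHomeomorph (· ∈ s) ⁻¹' codeSet I = codeSet I := by
  have key : ∀ t ∈ codeSet I, xorHomeomorph (· ∈ s) t ∈ codeSet I := fun t ht =>
    hSub _ _ (fun n => by cases h : t n <;> simp_all) (hUnion _ _ ht (hFin _ s.finite_toSet))
  exact Set.ext fun t => ⟨fun h => by simpa using key _ h, key t⟩

lemma isMeagre_codeSet (hUnion : ∀ A B : Set ℕ, A ∈ I → B ∈ I → A ∪ B ∈ I)
    (hSub : ∀ A B : Set ℕ, A ⊆ B → B ∈ I → A ∈ I) (hProper : (Set.univ : Set ℕ) ∉ I)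
    (hFin : ∀ A : Set ℕ, A.Finite → A ∈ I) (hBP : BaireMeasurableSet (codeSet I)) :
    IsMeagre (codeSet I) := by
  by_contra hnm
  have hres : codeSet I ∈ residual _ := by
    simpa [IsMeagre] using isMeagre_compl_of_forall_xorHomeomorph_preimage_eq hBP
      (xorHomeomorph_preimage_codeSet hUnion hSub hFin) hnm
  set c := xorHomeomorph fun _ => true
  have hres' : c ⁻¹' codeSet I ∈ residual _ :=
    tendsto_residual_of_isOpenMap c.continuous c.isOpenMap hres
  obtain ⟨t, ht, htc⟩ := (dense_of_mem_residual (Filter.inter_mem hres hres')).nonempty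
  refine hProper (hSub _ _ (fun n _ => ?_) (hUnion _ _ ht htc))
  cases h : t n <;> simp [c, h]

end Ideal

lemma IsMeagre.exists_antitone_isOpen_dense {X : Type*} [TopologicalSpace X] [BaireSpace X]
    {s : Set X} (hs : IsMeagre s) :
    ∃ U : ℕ → Set X, Antitone U ∧ (∀ n, IsOpen (U n) ∧ Dense (U n)) ∧ ∀ x ∈ s, ∃ n, x ∉ U n := by
  obtain ⟨t, hts, htG, htd⟩ := mem_residual.1 hs
  obtain ⟨f, hfo, rfl⟩ := isGδ_iff_eq_iInter_nat.1 htG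
  refine ⟨fun n => ⋂ i ∈ Iic n, f i,
    fun m n hmn => biInter_subset_biInter_left (Iic_subset_Iic.2 hmn), fun n => ⟨(finite_Iic n).isOpen_biInter fun i _ => hfo i,
      htd.mono (subset_iInter₂ fun i _ => iInter_subset f i)⟩, fun x hx => ?_⟩
  obtain ⟨n, hn⟩ : ∃ n, x ∉ f n := by simpa using fun h => hts h hx
  exact ⟨n, fun h => hn (mem_iInter₂.1 h n self_mem_Iic)⟩

/-- Take `t₀` in the dense open set of points all of whose modifications below `m` lie in `U`. -/
lemma exists_window_subset {U : Set (ℕ → Bool)} (hU : IsOpen U) (hd : Dense U) (m : ℕ) :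
    ∃ t₀ : ℕ → Bool, ∃ b, m < b ∧ ∀ t : ℕ → Bool, (∀ i, m ≤ i → i < b → t i = t₀ i) → t ∈ U := by
  set V := ⋂ s ∈ (Finset.range m).powerset, xorHomeomorph (· ∈ s) ⁻¹' U
  have hVo : IsOpen V := (Finset.finite_toSet _).isOpen_biInter fun s _ =>
    hU.preimage (xorHomeomorph _).continuous
  have hVd : Dense V := dense_biInter_of_isOpen
    (fun s _ => hU.preimage (xorHomeomorph _).continuous) (Finset.countable_toSet _)
    fun s _ => hd.preimage (xorHomeomorph _).isOpenMap
  obtain ⟨t₀, ht₀⟩ := hVd.nonempty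
  obtain ⟨b, hb⟩ := exists_cylinder_subset hVo ht₀
  refine ⟨t₀, max b (m + 1), by omega, fun t ht => ?_⟩
  obtain ⟨s, hs, hts, htail⟩ := exists_xorHomeomorph_mem_cylinder t t₀ m
  have hmem : xorHomeomorph (· ∈ s) t ∈ V := by
    refine hb (cylinder_anti t₀ (le_max_left b (m + 1)) fun i hi => ?_)
    rcases lt_or_ge i m with him | him
    · exact hts i him
    · rw [htail i him, ht i him hi]
  simpa using mem_iInter₂.1 hmem s hs

lemma StrictMono.eq_of_mem_Ico_succ {a : ℕ → ℕ} (ha : StrictMono a) {i j j' : ℕ}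
    (h : i ∈ Ico (a j) (a (j + 1))) (h' : i ∈ Ico (a j') (a (j' + 1))) : j = j' := by
  by_contra hne
  rcases Nat.lt_or_gt_of_ne hne with hlt | hlt
  · have := ha.monotone (show j + 1 ≤ j' by omega); simp only [mem_Ico] at h h'; omega
  · have := ha.monotone (show j' + 1 ≤ j by omega); simp only [mem_Ico] at h h'; omega

/-- Talagrand, Jalali-Naini. -/
theorem exists_strictMono_finite_setOf_Ico_subset {I : Set (Set ℕ)}
    (hSub : ∀ A B : Set ℕ, A ⊆ B → B ∈ I → A ∈ I) (hI : IsMeagre (codeSet I)) :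
    ∃ a : ℕ → ℕ, StrictMono a ∧ ∀ A ∈ I, {j | Ico (a j) (a (j + 1)) ⊆ A}.Finite := by
  classical
  obtain ⟨U, hUanti, hU, hcover⟩ := hI.exists_antitone_isOpen_dense
  choose t₀ b hb hwin using fun k m => exists_window_subset (hU k).1 (hU k).2 m
  set a : ℕ → ℕ := fun j => Nat.rec 0 (fun j aj => b j aj) j
  have ha : StrictMono a := strictMono_nat_of_lt_succ fun j => hb j (a j)
  refine ⟨a, ha, fun A hA => ?_⟩
  by_contra hinf
  set N := {j | Ico (a j) (a (j + 1)) ⊆ A}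
  -- `χ` copies the pattern `t₀ j (a j)` onto each interval `j ∈ N`.
  set χ : ℕ → Bool := fun i => decide (∃ j ∈ N, i ∈ Ico (a j) (a (j + 1)) ∧ t₀ j (a j) i = true)
  have hχ : χ ∈ codeSet I := hSub _ _ (fun i hi => by
    obtain ⟨j, hj, hij, -⟩ := of_decide_eq_true (show χ i = true from hi)
    exact hj hij) hA
  obtain ⟨k, hk⟩ := hcover χ hχ
  obtain ⟨j, hjN, hkj⟩ := Set.Infinite.exists_gt hinf k
  refine hk (hUanti hkj.le (hwin j (a j) χ fun i hi₁ hi₂ => ?_))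
  have hij : i ∈ Ico (a j) (a (j + 1)) := ⟨hi₁, hi₂⟩
  cases h : t₀ j (a j) i
  · simp only [χ, decide_eq_false_iff_not]
    rintro ⟨j', -, hij', h'⟩
    rw [ha.eq_of_mem_Ico_succ hij' hij, h] at h'
    exact Bool.false_ne_true h'
  · exact decide_eq_true ⟨j, hjN, hij, h⟩

lemma exists_cylinder_subset_of_not_isMeagre {F : Set (ℕ → Bool)} (hF : IsClosed F)
    (h : ¬ IsMeagre F) : ∃ t₀ m, cylinder t₀ m ⊆ F := by
  obtain ⟨t₀, ht₀⟩ : (interior F).Nonempty := by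
    by_contra! hint
    exact h ((hF.isNowhereDense_iff.2 hint).isMeagre)
  obtain ⟨m, hm⟩ := exists_cylinder_subset isOpen_interior ht₀
  exact ⟨t₀, m, hm.trans interior_subset⟩

section TailBound

variable {X : Type*} [SeminormedAddCommGroup X]

lemma continuous_sum_range_ite (x : ℕ → X) (n : ℕ) :
    Continuous fun t : ℕ → Bool => ∑ i ∈ Finset.range n, if t i then x i else 0 :=
  continuous_finsetSum _ fun i _ =>
    (continuous_of_discreteTopology (f := fun b : Bool => if b then x i else 0)).comp
      (continuous_apply i)

lemma sum_range_ite_piecewise (x : ℕ → X) (t₀ : ℕ → Bool) {m n : ℕ} (hmn : m ≤ n)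
    {E : Finset ℕ} (hE : ∀ i ∈ E, m ≤ i ∧ i < n) :
    ∑ i ∈ Finset.range n, (if (if i < m then t₀ i else decide (i ∈ E)) then x i else 0) =
      (∑ i ∈ Finset.range m, if t₀ i then x i else 0) + ∑ i ∈ E, x i := by
  rw [← Finset.sum_range_add_sum_Ico _ hmn]
  congr 1
  · exact Finset.sum_congr rfl fun i hi => by simp [Finset.mem_range.1 hi]
  · have hEq : ∀ i ∈ Finset.Ico m n,
        (if (if i < m then t₀ i else decide (i ∈ E)) then x i else 0) = if i ∈ E then x i else 0 :=
      fun i hi => by simp [show ¬ i < m from not_lt.2 (Finset.mem_Ico.1 hi).1]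
    rw [Finset.sum_congr rfl hEq, Finset.sum_ite_mem,
      Finset.inter_eq_right.2 fun i hi => Finset.mem_Ico.2 (hE i hi)]

/-- Compare the pattern `t₀` followed by the indicator of `E` with `t₀` followed by zeros. -/
lemma norm_sum_le_of_frequently_on_cylinder {x : ℕ → X} {t₀ : ℕ → Bool} {m : ℕ} {M : ℝ}
    (h : ∀ t ∈ cylinder t₀ m, ∃ᶠ n in atTop, ‖∑ i ∈ Finset.range n, if t i then x i else 0‖ ≤ M)
    (E : Finset ℕ) (hE : ∀ i ∈ E, m ≤ i) : ‖∑ i ∈ E, x i‖ ≤ 2 * M := by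
  classical
  set P := ∑ i ∈ Finset.range m, if t₀ i then x i else 0
  have key : ∀ E : Finset ℕ, (∀ i ∈ E, m ≤ i) → ‖P + ∑ i ∈ E, x i‖ ≤ M := by
    intro E hE
    obtain ⟨n, hn, hnE⟩ := ((h (fun i => if i < m then t₀ i else decide (i ∈ E))
      fun i hi => if_pos hi).and_eventually (eventually_ge_atTop (max m (E.sup id + 1)))).exists
    rwa [sum_range_ite_piecewise x t₀ (le_of_max_le_left hnE) fun i hi =>
      ⟨hE i hi, (Finset.le_sup (f := id) hi).trans_lt (le_of_max_le_right hnE)⟩] at hn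
  calc ‖∑ i ∈ E, x i‖ = ‖(P + ∑ i ∈ E, x i) - P‖ := by rw [add_sub_cancel_left]
    _ ≤ ‖P + ∑ i ∈ E, x i‖ + ‖P‖ := norm_sub_le _ _
    _ ≤ M + M := add_le_add (key E hE) (by simpa using key ∅ (by simp))
    _ = 2 * M := by ring

/-- The closed sets `H M r` of patterns whose partial sums come back to the ball of radius `M` on
every interval `[a j, a (j + 1))` with `r ≤ j` cover the set, since a member of `I` contains only
finitely many of these intervals. By Baire category one of them contains a cylinder. -/
lemma exists_norm_sum_le_of_not_isMeagre {I : Set (Set ℕ)} {a : ℕ → ℕ} (ha : StrictMono a)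
    (hI : ∀ A ∈ I, {j | Ico (a j) (a (j + 1)) ⊆ A}.Finite) {x : ℕ → X}
    (hnm : ¬ IsMeagre {t : ℕ → Bool | ∃ M > (0 : ℝ),
      {n : ℕ | M < ‖∑ i ∈ Finset.range n, if t i then x i else 0‖} ∈ I}) :
    ∃ m C, ∀ E : Finset ℕ, (∀ i ∈ E, m ≤ i) → ‖∑ i ∈ E, x i‖ ≤ C := by
  set S := fun (t : ℕ → Bool) n => ∑ i ∈ Finset.range n, if t i then x i else 0
  set H : ℕ → ℕ → Set (ℕ → Bool) := fun M r =>
    ⋂ j, ⋂ (_ : r ≤ j), ⋃ n ∈ Finset.Ico (a j) (a (j + 1)), {t | ‖S t n‖ ≤ M}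
  have hcover : {t : ℕ → Bool | ∃ M > (0 : ℝ), {n : ℕ | M < ‖S t n‖} ∈ I} ⊆ ⋃ M, ⋃ r, H M r := by
    rintro t ⟨M, -, hM⟩
    obtain ⟨r, hr⟩ := (hI _ hM).bddAbove
    refine mem_iUnion₂.2 ⟨⌈M⌉₊, r + 1, mem_iInter₂.2 fun j hj => ?_⟩
    obtain ⟨n, hn, hnM⟩ : ∃ n ∈ Ico (a j) (a (j + 1)), ¬ M < ‖S t n‖ :=
      not_subset.1 fun hsub => by have := hr hsub; omega
    exact mem_iUnion₂.2 ⟨n, by simpa using hn, (not_lt.1 hnM).trans (Nat.le_ceil M)⟩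
  obtain ⟨M, r, hMr⟩ : ∃ M r, ¬ IsMeagre (H M r) := by
    by_contra! hall
    exact hnm ((isMeagre_iUnion fun M => isMeagre_iUnion fun r => hall M r).mono hcover)
  have hclosed : IsClosed (H M r) :=
    isClosed_iInter fun j => isClosed_iInter fun _ => isClosed_biUnion_finset fun n _ =>
      isClosed_le (continuous_norm.comp (continuous_sum_range_ite x n)) continuous_const
  obtain ⟨t₀, m, hcyl⟩ := exists_cylinder_subset_of_not_isMeagre hclosed hMr
  refine ⟨m, 2 * M, norm_sum_le_of_frequently_on_cylinder (t₀ := t₀) fun t ht =>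
    frequently_atTop.2 fun N => ?_⟩
  obtain ⟨n, hn, hnM⟩ := mem_iUnion₂.1 (mem_iInter₂.1 (hcyl ht) (max r N) (le_max_left r N))
  exact ⟨n, (le_max_right r N).trans ((ha.id_le _).trans (Finset.mem_Ico.1 hn).1), hnM⟩

end TailBound

section Blocks

variable {X : Type*} [NormedAddCommGroup X]

lemma Summable.unconditionallyConvergent {x : ℕ → X} (h : Summable x) :
    UnconditionallyConvergent x := fun p =>
  ⟨_, ((Equiv.summable_iff p).2 h).hasSum.tendsto_sum_nat⟩

lemma UnconditionallyConvergent.tendsto_zero {x : ℕ → X} (h : UnconditionallyConvergent x) :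
    Tendsto x atTop (𝓝 0) := by
  obtain ⟨L, hL⟩ := h (Equiv.refl ℕ)
  simpa [Finset.sum_range_succ] using (hL.comp (tendsto_add_atTop_nat 1)).sub hL

lemma exists_forall_exists_le_norm_sum_of_not_summable [CompleteSpace X] {x : ℕ → X}
    (hx : ¬ Summable x) :
    ∃ δ > 0, ∀ N, ∃ E : Finset ℕ, (∀ i ∈ E, N ≤ i) ∧ δ ≤ ‖∑ i ∈ E, x i‖ := by
  simp only [summable_iff_vanishing_norm, not_forall, not_exists, not_lt] at hx
  obtain ⟨δ, hδ, h⟩ := hx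
  refine ⟨δ, hδ, fun N => ?_⟩
  obtain ⟨E, hdisj, hE⟩ := h (Finset.range N)
  exact ⟨E, fun i hi => not_lt.1 fun hiN =>
    Finset.disjoint_left.1 hdisj hi (Finset.mem_range.2 hiN), hE⟩

/-- The sequence consists of the sums of `x` over pairwise disjoint blocks. -/
lemma exists_bounded_sums_of_forall_exists_le_norm_sum {x : ℕ → X} {m : ℕ} {C δ : ℝ}
    (hC : ∀ E : Finset ℕ, (∀ i ∈ E, m ≤ i) → ‖∑ i ∈ E, x i‖ ≤ C)
    (hblock : ∀ N, ∃ E : Finset ℕ, (∀ i ∈ E, N ≤ i) ∧ δ ≤ ‖∑ i ∈ E, x i‖) :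
    ∃ u : ℕ → X, (∀ F : Finset ℕ, ‖∑ j ∈ F, u j‖ ≤ C) ∧ ∀ j, δ ≤ ‖u j‖ := by
  classical
  obtain ⟨E, hE, hdisj⟩ := exists_seq_of_forall_finset_exists'
    (fun E : Finset ℕ => (∀ i ∈ E, m ≤ i) ∧ δ ≤ ‖∑ i ∈ E, x i‖) Disjoint fun s _ => by
      obtain ⟨E, hEN, hE⟩ := hblock (max m (s.sup (fun E => E.sup id) + 1))
      refine ⟨E, ⟨fun i hi => le_of_max_le_left (hEN i hi), hE⟩, fun E' hE' => ?_⟩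
      refine Finset.disjoint_left.2 fun i hi' hi => ?_
      have h₁ : i ≤ s.sup (fun E => E.sup id) :=
        (Finset.le_sup (f := id) hi').trans (Finset.le_sup (f := fun E => E.sup id) hE')
      have h₂ := le_of_max_le_right (hEN i hi)
      omega
  refine ⟨fun j => ∑ i ∈ E j, x i, fun F => ?_, fun j => (hE j).2⟩
  rw [← Finset.sum_biUnion (hdisj.set_pairwise _)]
  exact hC _ fun i hi => by
    obtain ⟨j, -, hij⟩ := Finset.mem_biUnion.1 hi
    exact (hE j).1 i hij

end Blocks

section BoundedSums

variable {X : Type*} [NormedAddCommGroup X] [NormedSpace ℝ X] {u : ℕ → X} {C : ℝ}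

lemma sum_abs_apply_le (hC : ∀ F : Finset ℕ, ‖∑ i ∈ F, u i‖ ≤ C) (f : StrongDual ℝ X)
    (F : Finset ℕ) : ∑ i ∈ F, |f (u i)| ≤ 2 * C * ‖f‖ := by
  have hG : ∀ G : Finset ℕ, |f (∑ i ∈ G, u i)| ≤ C * ‖f‖ := fun G => by
    rw [mul_comm, ← Real.norm_eq_abs]
    exact (f.le_opNorm _).trans (mul_le_mul_of_nonneg_left (hC G) (norm_nonneg f))
  set Fp := F.filter fun i => 0 ≤ f (u i)
  set Fn := F.filter fun i => ¬ 0 ≤ f (u i)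
  have hp : ∑ i ∈ Fp, |f (u i)| = f (∑ i ∈ Fp, u i) := by
    rw [map_sum]
    exact Finset.sum_congr rfl fun i hi => abs_of_nonneg (Finset.mem_filter.1 hi).2
  have hn : ∑ i ∈ Fn, |f (u i)| = -f (∑ i ∈ Fn, u i) := by
    rw [map_sum, ← Finset.sum_neg_distrib]
    exact Finset.sum_congr rfl fun i hi => abs_of_neg (not_le.1 (Finset.mem_filter.1 hi).2)
  rw [← Finset.sum_filter_add_sum_filter_not F fun i => 0 ≤ f (u i), hp, hn]
  linarith [le_abs_self (f (∑ i ∈ Fp, u i)), neg_le_abs (f (∑ i ∈ Fn, u i)), hG Fp, hG Fn]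

lemma norm_sum_smul_le (hC : ∀ F : Finset ℕ, ‖∑ i ∈ F, u i‖ ≤ C) {a : ℕ → ℝ} {β : ℝ}
    (hβ : 0 ≤ β) {F : Finset ℕ} (ha : ∀ i ∈ F, |a i| ≤ β) : ‖∑ i ∈ F, a i • u i‖ ≤ 2 * C * β := by
  obtain ⟨f, hf₁, hf₂⟩ := exists_dual_vector'' ℝ (∑ i ∈ F, a i • u i)
  have hC₀ : 0 ≤ C := by simpa using hC ∅
  calc ‖∑ i ∈ F, a i • u i‖ = ∑ i ∈ F, a i * f (u i) := by simpa [map_sum] using hf₂.symm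
    _ ≤ ∑ i ∈ F, β * |f (u i)| := Finset.sum_le_sum fun i hi =>
        (le_abs_self _).trans <| by
          rw [abs_mul]; exact mul_le_mul_of_nonneg_right (ha i hi) (abs_nonneg _)
    _ = β * ∑ i ∈ F, |f (u i)| := by rw [Finset.mul_sum]
    _ ≤ β * (2 * C * ‖f‖) := mul_le_mul_of_nonneg_left (sum_abs_apply_le hC f F) hβ
    _ ≤ β * (2 * C * 1) := by gcongr
    _ = 2 * C * β := by ring

lemma tendsto_apply_zero (hC : ∀ F : Finset ℕ, ‖∑ i ∈ F, u i‖ ≤ C) (f : StrongDual ℝ X) :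
    Tendsto (fun n => f (u n)) atTop (𝓝 0) := by
  have := (summable_of_sum_range_le (fun n => abs_nonneg (f (u n)))
    fun n => sum_abs_apply_le hC f (Finset.range n)).tendsto_atTop_zero
  exact tendsto_zero_iff_norm_tendsto_zero.2 (by simpa only [Real.norm_eq_abs] using this)

end BoundedSums

section Selection

variable {X : Type*} [NormedAddCommGroup X] [NormedSpace ℝ X]

/-- Otherwise a subsequence would converge, by compactness of bounded sets in `F`, to a vector of
norm at most `δ / 3`. -/
lemma frequently_le_infDist {u : ℕ → X} {δ B : ℝ} (hδ : 0 < δ) (hlb : ∀ n, δ ≤ ‖u n‖)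
    (hub : ∀ n, ‖u n‖ ≤ B) (hwn : ∀ f : StrongDual ℝ X, Tendsto (fun n => f (u n)) atTop (𝓝 0))
    (F : Submodule ℝ X) [FiniteDimensional ℝ F] :
    ∃ᶠ n in atTop, δ / 3 ≤ infDist (u n) F := by
  by_contra h
  simp only [not_frequently, not_le] at h
  obtain ⟨ψ, hψ, hψF⟩ := extraction_of_eventually_atTop h
  choose v hvF hv using fun k => (infDist_lt_iff ⟨0, F.zero_mem⟩).1 (hψF k)
  have hvb : ∀ k, (⟨v k, hvF k⟩ : F) ∈ closedBall (0 : F) (B + δ / 3) := fun k => by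
    have := norm_le_norm_add_norm_sub' (v k) (u (ψ k))
    rw [← dist_eq_norm, dist_comm] at this
    simpa using this.trans (add_le_add (hub _) (hv k).le)
  have : ProperSpace F := FiniteDimensional.proper ℝ F
  obtain ⟨b, -, φ, hφ, hb⟩ := tendsto_subseq_of_bounded isBounded_closedBall hvb
  have hw : Tendsto (fun k => v (φ k)) atTop (𝓝 (b : X)) :=
    (continuous_subtype_val.tendsto _).comp hb
  have hbδ : ‖(b : X)‖ ≤ δ / 3 := by
    refine NormedSpace.norm_le_dual_bound ℝ _ (by positivity) fun f => ?_
    have hlim : Tendsto (fun k => f (v (φ k) - u (ψ (φ k)))) atTop (𝓝 (f b)) := by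
      simpa using ((f.continuous.tendsto _).comp hw).sub ((hwn f).comp (hψ.comp hφ).tendsto_atTop)
    refine le_of_tendsto' hlim.norm fun k => ?_
    rw [mul_comm]
    refine (f.le_opNorm _).trans (mul_le_mul_of_nonneg_left ?_ (norm_nonneg f))
    rw [← dist_eq_norm, dist_comm]
    exact (hv _).le
  obtain ⟨k, hk⟩ := (hw.eventually (ball_mem_nhds _ (by positivity : 0 < δ / 3))).exists
  have := dist_triangle4 (u (ψ (φ k))) (v (φ k)) b 0
  rw [dist_zero_right, dist_zero_right] at this
  linarith [hlb (ψ (φ k)), hv (φ k), mem_ball.1 hk]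

lemma exists_dual_eq_one_of_le_infDist {F : Submodule ℝ X} (hF : IsClosed (F : Set X)) {y : X}
    {d : ℝ} (hd : 0 < d) (hy : d ≤ infDist y F) :
    ∃ g : StrongDual ℝ X, g y = 1 ∧ ‖g‖ ≤ d⁻¹ ∧ ∀ z ∈ F, g z = 0 := by
  have : IsClosed (F : Set X) := hF
  have hnorm : ∀ x : X, ‖F.mkQL x‖ = infDist x F := QuotientAddGroup.norm_mk
  have hq : 0 < ‖F.mkQL y‖ := (hnorm y).symm ▸ hd.trans_le hy
  obtain ⟨φ, hφ₁, hφ₂⟩ := exists_dual_vector ℝ (F.mkQL y) hq.ne'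
  refine ⟨‖F.mkQL y‖⁻¹ • φ.comp F.mkQL, ?_, ?_, fun z hz => ?_⟩
  · rw [smul_apply, ContinuousLinearMap.comp_apply, hφ₂, smul_eq_mul]
    exact inv_mul_cancel₀ hq.ne'
  · refine ContinuousLinearMap.opNorm_le_bound _ (by positivity) fun x => ?_
    calc ‖(‖F.mkQL y‖⁻¹ • φ.comp F.mkQL) x‖ = ‖F.mkQL y‖⁻¹ * ‖φ (F.mkQL x)‖ := by
          simp
      _ ≤ ‖F.mkQL y‖⁻¹ * ‖x‖ := by
          gcongr
          exact (φ.le_opNorm _).trans <| by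
            rw [hφ₁, one_mul]; exact Submodule.Quotient.norm_mk_le F x
      _ ≤ d⁻¹ * ‖x‖ := by gcongr; exact (hnorm y).symm ▸ hy
  · simp [(Submodule.Quotient.mk_eq_zero F).2 hz]

/-- Each new term is chosen far from the span of the earlier ones, so that a functional of
controlled norm separates it from them, and almost killed by the earlier functionals. The first
component of the triples only records the position in the sequence. -/
lemma exists_almost_biorthogonal_subseq {u : ℕ → X} {δ C : ℝ} (hδ : 0 < δ)
    (hC : ∀ F : Finset ℕ, ‖∑ i ∈ F, u i‖ ≤ C) (hlb : ∀ n, δ ≤ ‖u n‖) :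
    ∃ (k : ℕ → ℕ) (g : ℕ → StrongDual ℝ X), StrictMono k ∧ (∀ j, g j (u (k j)) = 1) ∧
      (∀ j, ‖g j‖ ≤ 3 / δ) ∧ ∀ i j, i ≠ j → |g j (u (k i))| ≤ (1 / 2) ^ i / 4 := by
  classical
  have hwn := tendsto_apply_zero hC
  have hsmall : ∀ (f : StrongDual ℝ X) (ε : ℝ), 0 < ε → ∀ᶠ n in atTop, |f (u n)| ≤ ε :=
    fun f ε hε => by simpa [Real.norm_eq_abs] using (hwn f).eventually (closedBall_mem_nhds 0 hε)
  obtain ⟨f, hfP, hfr⟩ := exists_seq_of_forall_finset_exists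
    (fun q : ℕ × ℕ × StrongDual ℝ X => q.2.2 (u q.2.1) = 1 ∧ ‖q.2.2‖ ≤ 3 / δ)
    (fun p q => p.1 < q.1 ∧ p.2.1 < q.2.1 ∧ q.2.2 (u p.2.1) = 0 ∧
      |p.2.2 (u q.2.1)| ≤ (1 / 2) ^ q.1 / 4) fun s _ => by
    set pos := s.sup Prod.fst + 1
    set F := Submodule.span ℝ ((s.image fun p => u p.2.1 : Finset X) : Set X)
    obtain ⟨n, hnF, hns⟩ := ((frequently_le_infDist hδ hlb (fun n => by simpa using hC {n}) hwn
      F).and_eventually ((eventually_all_finset s).2 fun p _ =>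
        (eventually_gt_atTop p.2.1).and (hsmall p.2.2 ((1 / 2) ^ pos / 4) (by positivity)))).exists
    obtain ⟨g, hg₁, hg₂, hg₀⟩ :=
      exists_dual_eq_one_of_le_infDist F.closed_of_finiteDimensional (by positivity) hnF
    refine ⟨(pos, n, g), ⟨hg₁, by rwa [inv_div] at hg₂⟩, fun p hp =>
      ⟨Nat.lt_succ_of_le (Finset.le_sup hp), (hns p hp).1, hg₀ _ ?_, (hns p hp).2⟩⟩
    exact Submodule.subset_span (Finset.mem_coe.2 (Finset.mem_image_of_mem _ hp))
  have hpos : StrictMono fun j => (f j).1 := fun i j h => (hfr i j h).1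
  refine ⟨fun j => (f j).2.1, fun j => (f j).2.2, fun i j h => (hfr i j h).2.1,
    fun j => (hfP j).1, fun j => (hfP j).2, fun i j hij => ?_⟩
  rcases Nat.lt_or_gt_of_ne hij with h | h
  · rw [(hfr i j h).2.2.1, abs_zero]
    positivity
  · refine (hfr j i h).2.2.2.trans (div_le_div_of_nonneg_right ?_ (by norm_num))
    exact pow_le_pow_of_le_one (by norm_num) (by norm_num) (hpos.id_le i)

end Selection

lemma ZeroAtInftyContinuousMap.tendsto_atTop_nat (v : ZeroAtInftyContinuousMap ℕ ℝ) :
    Tendsto v atTop (𝓝 0) := by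
  simpa [cocompact_eq_cofinite, Nat.cofinite_eq_atTop] using v.zero_at_infty'

lemma ZeroAtInftyContinuousMap.abs_apply_le_norm (v : ZeroAtInftyContinuousMap ℕ ℝ) (j : ℕ) :
    |v j| ≤ ‖v‖ := by
  simpa using v.toBCF.norm_coe_le_norm j

section C0Embedding

variable {X : Type*} [NormedAddCommGroup X] [NormedSpace ℝ X] [CompleteSpace X] {w : ℕ → X}
  {C : ℝ}

lemma summable_smul_of_tendsto_zero (hC : ∀ F : Finset ℕ, ‖∑ i ∈ F, w i‖ ≤ C) {a : ℕ → ℝ}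
    (ha : Tendsto a atTop (𝓝 0)) : Summable fun j => a j • w j := by
  have hC₀ : 0 ≤ C := by simpa using hC ∅
  refine summable_iff_vanishing_norm.2 fun ε hε => ?_
  have hε' : 0 < ε / (4 * C + 4) := by positivity
  obtain ⟨N, hN⟩ : ∃ N, ∀ j ≥ N, |a j| ≤ ε / (4 * C + 4) := by
    simpa [Real.norm_eq_abs] using ha.eventually (closedBall_mem_nhds 0 hε')
  refine ⟨Finset.range N, fun t ht => ?_⟩
  calc ‖∑ j ∈ t, a j • w j‖ ≤ 2 * C * (ε / (4 * C + 4)) :=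
        norm_sum_smul_le hC hε'.le fun j hj =>
          hN j (not_lt.1 fun h => Finset.disjoint_left.1 ht hj (Finset.mem_range.2 h))
    _ < ε := by
        rw [mul_div_assoc', div_lt_iff₀ (by positivity)]
        nlinarith

noncomputable def c0SeriesCLM (hC : ∀ F : Finset ℕ, ‖∑ i ∈ F, w i‖ ≤ C) :
    ZeroAtInftyContinuousMap ℕ ℝ →L[ℝ] X :=
  LinearMap.mkContinuous
    { toFun := fun v => ∑' j, v j • w j
      map_add' := fun v v' => by
        simp only [ZeroAtInftyContinuousMap.add_apply, add_smul]
        exact (summable_smul_of_tendsto_zero hC v.tendsto_atTop_nat).tsum_add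
          (summable_smul_of_tendsto_zero hC v'.tendsto_atTop_nat)
      map_smul' := fun c v => by
        simp only [ZeroAtInftyContinuousMap.smul_apply, smul_eq_mul, mul_smul, RingHom.id_apply]
        exact (summable_smul_of_tendsto_zero hC v.tendsto_atTop_nat).tsum_const_smul c }
    (2 * C) fun v =>
      le_of_tendsto' ((continuous_norm.tendsto _).comp
        (summable_smul_of_tendsto_zero hC v.tendsto_atTop_nat).hasSum) fun s =>
          norm_sum_smul_le hC (norm_nonneg v) fun j _ => v.abs_apply_le_norm j

lemma hasSum_c0SeriesCLM (hC : ∀ F : Finset ℕ, ‖∑ i ∈ F, w i‖ ≤ C)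
    (v : ZeroAtInftyContinuousMap ℕ ℝ) : HasSum (fun j => v j • w j) (c0SeriesCLM hC v) :=
  (summable_smul_of_tendsto_zero hC v.tendsto_atTop_nat).hasSum

lemma abs_apply_c0SeriesCLM_sub_le (hC : ∀ F : Finset ℕ, ‖∑ i ∈ F, w i‖ ≤ C)
    {g : StrongDual ℝ X} {j : ℕ} (hgj : g (w j) = 1) (hg : ∀ i, i ≠ j → |g (w i)| ≤ (1 / 2) ^ i / 4)
    (v : ZeroAtInftyContinuousMap ℕ ℝ) : |g (c0SeriesCLM hC v) - v j| ≤ ‖v‖ / 2 := by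
  classical
  have h₁ : HasSum (fun i => v i * g (w i) - if i = j then v j else 0)
      (g (c0SeriesCLM hC v) - v j) := by
    simpa [smul_eq_mul] using ((hasSum_c0SeriesCLM hC v).mapL g).sub (hasSum_ite_eq j (v j))
  have h₂ : HasSum (fun i : ℕ => ‖v‖ / 4 * (1 / 2) ^ i) (‖v‖ / 4 * 2) :=
    hasSum_geometric_two.mul_left _
  have := h₁.norm_le_of_bounded h₂ fun i => by
    by_cases hij : i = j
    · subst hij
      simp only [hgj, mul_one, if_true, sub_self, norm_zero]
      positivity
    · rw [if_neg hij, sub_zero, Real.norm_eq_abs, abs_mul]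
      calc |v i| * |g (w i)| ≤ ‖v‖ * ((1 / 2) ^ i / 4) :=
            mul_le_mul (v.abs_apply_le_norm i) (hg i hij) (abs_nonneg _) (norm_nonneg v)
        _ = ‖v‖ / 4 * (1 / 2) ^ i := by ring
  rw [Real.norm_eq_abs] at this
  linarith

lemma containsCopyOfC0_of_almost_biorthogonal (hC : ∀ F : Finset ℕ, ‖∑ i ∈ F, w i‖ ≤ C)
    {g : ℕ → StrongDual ℝ X} {K : ℝ} (hK : 0 < K) (hg₁ : ∀ j, g j (w j) = 1)
    (hgK : ∀ j, ‖g j‖ ≤ K) (hg : ∀ i j, i ≠ j → |g j (w i)| ≤ (1 / 2) ^ i / 4) :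
    ContainsCopyOfC0 X := by
  refine ⟨c0SeriesCLM hC, (2 * K)⁻¹, by positivity, fun v => ?_⟩
  have hv : ‖v‖ ≤ K * ‖c0SeriesCLM hC v‖ + ‖v‖ / 2 := by
    rw [← ZeroAtInftyContinuousMap.norm_toBCF_eq_norm]
    refine (BoundedContinuousFunction.norm_le (by positivity)).2 fun j => ?_
    have h₁ := abs_apply_c0SeriesCLM_sub_le hC (hg₁ j) (fun i hi => hg i j hi) v
    have h₂ : |g j (c0SeriesCLM hC v)| ≤ K * ‖c0SeriesCLM hC v‖ :=
      ((g j).le_opNorm _).trans (mul_le_mul_of_nonneg_right (hgK j) (norm_nonneg _))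
    rw [ZeroAtInftyContinuousMap.norm_toBCF_eq_norm, Real.norm_eq_abs]
    change |v j| ≤ _
    have h₃ := abs_sub_abs_le_abs_sub (v j) (g j (c0SeriesCLM hC v))
    rw [abs_sub_comm] at h₃
    linarith
  rw [inv_mul_le_iff₀ (by positivity)]
  linarith

end C0Embedding

lemma containsCopyOfC0_of_norm_sum_le {X : Type*} [NormedAddCommGroup X] [NormedSpace ℝ X]
    [CompleteSpace X] {u : ℕ → X} {δ C : ℝ} (hδ : 0 < δ)
    (hC : ∀ F : Finset ℕ, ‖∑ i ∈ F, u i‖ ≤ C) (hlb : ∀ n, δ ≤ ‖u n‖) : ContainsCopyOfC0 X := by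
  obtain ⟨k, g, hk, hg₁, hgK, hg⟩ := exists_almost_biorthogonal_subseq hδ hC hlb
  refine containsCopyOfC0_of_almost_biorthogonal (w := u ∘ k) (C := C) (fun F => ?_)
    (by positivity : 0 < 3 / δ) hg₁ hgK hg
  rw [Function.comp_def, ← Finset.sum_image fun _ _ _ _ h => hk.injective h]
  exact hC _

section UnitVectors

noncomputable def c0UnitVector (n : ℕ) : ZeroAtInftyContinuousMap ℕ ℝ where
  toFun m := if m = n then 1 else 0
  continuous_toFun := continuous_of_discreteTopology
  zero_at_infty' := by
    rw [cocompact_eq_cofinite, Nat.cofinite_eq_atTop]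
    exact tendsto_const_nhds.congr' ((eventually_gt_atTop n).mono fun m hm => (if_neg hm.ne').symm)

lemma ZeroAtInftyContinuousMap.finset_sum_apply {ι : Type*} (s : Finset ι)
    (f : ι → ZeroAtInftyContinuousMap ℕ ℝ) (m : ℕ) : (∑ i ∈ s, f i) m = ∑ i ∈ s, f i m :=
  map_sum (⟨⟨fun v => v m, rfl⟩, fun _ _ => rfl⟩ : ZeroAtInftyContinuousMap ℕ ℝ →+ ℝ) f s

lemma norm_sum_c0UnitVector_le (s : Finset ℕ) : ‖∑ i ∈ s, c0UnitVector i‖ ≤ 1 := by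
  rw [← ZeroAtInftyContinuousMap.norm_toBCF_eq_norm]
  refine (BoundedContinuousFunction.norm_le zero_le_one).2 fun m => ?_
  change ‖(∑ i ∈ s, c0UnitVector i) m‖ ≤ 1
  rw [ZeroAtInftyContinuousMap.finset_sum_apply]
  simp only [c0UnitVector, ZeroAtInftyContinuousMap.coe_mk, Finset.sum_ite_eq]
  split_ifs <;> simp

lemma one_le_norm_c0UnitVector (n : ℕ) : 1 ≤ ‖c0UnitVector n‖ := by
  simpa [c0UnitVector] using (c0UnitVector n).abs_apply_le_norm n

variable {X : Type*} [NormedAddCommGroup X] [NormedSpace ℝ X]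

lemma ContainsCopyOfC0.exists_not_unconditionallyConvergent (h : ContainsCopyOfC0 X) :
    ∃ x : ℕ → X, ¬ UnconditionallyConvergent x ∧
      ∃ M, ∀ (t : ℕ → Bool) n, ‖∑ i ∈ Finset.range n, if t i then x i else 0‖ ≤ M := by
  classical
  obtain ⟨T, c, hc, hT⟩ := h
  refine ⟨fun n => T (c0UnitVector n), fun hx => ?_, ‖T‖, fun t n => ?_⟩
  · obtain ⟨n, hn⟩ := (hx.tendsto_zero.eventually (ball_mem_nhds 0 hc)).exists
    have := (hT (c0UnitVector n)).trans' (le_mul_of_one_le_right hc.le (one_le_norm_c0UnitVector n))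
    exact (mem_ball_zero_iff.1 hn).not_ge this
  · rw [← Finset.sum_filter, ← map_sum]
    exact (T.le_opNorm _).trans
      (mul_le_of_le_one_right (norm_nonneg T) (norm_sum_c0UnitVector_le _))

end UnitVectors

theorem no_c0_iff_A_meager_general
    {X : Type*} [NormedAddCommGroup X] [NormedSpace ℝ X] [CompleteSpace X]
    (I : Set (Set ℕ))
    (hUnion : ∀ A B : Set ℕ, A ∈ I → B ∈ I → A ∪ B ∈ I)
    (hSub : ∀ A B : Set ℕ, A ⊆ B → B ∈ I → A ∈ I)
    (hProper : (Set.univ : Set ℕ) ∉ I)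
    (hFin : ∀ A : Set ℕ, A.Finite → A ∈ I)
    (hBP : IdealHasBaireProperty I) :
    ¬ ContainsCopyOfC0 X ↔
      ∀ x : ℕ → X, ¬ UnconditionallyConvergent x →
        IsMeagre {t : ℕ → Bool | ∃ M > (0 : ℝ),
          {n : ℕ | M < ‖∑ i ∈ Finset.range n, if t i then x i else 0‖} ∈ I} := by
  refine ⟨fun hno x hx => ?_, fun hA hc0 => ?_⟩
  · by_contra hnm
    obtain ⟨a, ha, hI⟩ := exists_strictMono_finite_setOf_Ico_subset hSub
      (isMeagre_codeSet hUnion hSub hProper hFin hBP)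
    obtain ⟨m, C, hC⟩ := exists_norm_sum_le_of_not_isMeagre ha hI hnm
    obtain ⟨δ, hδ, hblock⟩ :=
      exists_forall_exists_le_norm_sum_of_not_summable (mt Summable.unconditionallyConvergent hx)
    obtain ⟨u, hu, hlb⟩ := exists_bounded_sums_of_forall_exists_le_norm_sum hC hblock
    exact hno (containsCopyOfC0_of_norm_sum_le hδ hu hlb)
  · obtain ⟨x, hx, M, hM⟩ := hc0.exists_not_unconditionallyConvergent
    have huniv : IsMeagre (univ : Set (ℕ → Bool)) := (hA x hx).mono fun t _ => show ∃ _, _ from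
      ⟨max M 1, by positivity, hFin _ (finite_empty.subset fun n hn =>
        (hM t n).not_gt ((le_max_left M 1).trans_lt hn))⟩
    exact not_isMeagre_of_isOpen isOpen_univ univ_nonempty huniv

theorem no_c0_iff_A_meager
    {X : Type*} [NormedAddCommGroup X] [NormedSpace ℝ X] [CompleteSpace X]
    (I : Set (Set ℕ))
    (hEmpty : ∅ ∈ I)
    (hUnion : ∀ A B : Set ℕ, A ∈ I → B ∈ I → A ∪ B ∈ I)
    (hSub : ∀ A B : Set ℕ, A ⊆ B → B ∈ I → A ∈ I)
    (hProper : (Set.univ : Set ℕ) ∉ I)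
    (hFin : ∀ A : Set ℕ, A.Finite → A ∈ I)
    (hBP : IdealHasBaireProperty I) :
    ¬ ContainsCopyOfC0 X ↔
      ∀ x : ℕ → X, ¬ UnconditionallyConvergent x →
        IsMeagre {t : ℕ → Bool | ∃ M > (0 : ℝ),
          {n : ℕ | M < ‖∑ i ∈ Finset.range n, if t i then x i else 0‖} ∈ I} :=
  no_c0_iff_A_meager_general I hUnion hSub hProper hFin hBP
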